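/- Let A be an abelian group such that Â = lim A/mA has finite exponent. Then there exists a positive integer m₀ such that the natural map A/m₀A → Â is an isomorphism. -/

import Mathlib

/-!
Applying the exponent `e` of `Â` to the image of `a` under the diagonal map `A → Â` shows
`e • a ∈ mA` for every `m`, i.e. `eA ⊆ ⋂ₘ mA`. Hence `eA` is the kernel of the diagonal map,
and a compatible family `f` is the image of any lift `a` of `f e`: modulo `m`, `f m` is the
reduction of a lift `b` of `f (e * m)`, and `a - b ∈ eA ⊆ mA`.
-/

/-- The subgroup `nA` of an abelian group `A`. -/
def nsub (A : Type) [AddCommGroup A] (n : ℕ) : AddSubgroup A :=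
  AddMonoidHom.range (n • AddMonoidHom.id A)

theorem nsub_le (A : Type) [AddCommGroup A] {m n : ℕ} (h : m ∣ n) :
    nsub A n ≤ nsub A m := by
  rintro x ⟨a, rfl⟩
  obtain ⟨k, rfl⟩ := h
  exact ⟨k • a, by simp [mul_smul]⟩

/-- Transition map `A/nA → A/mA` for `m ∣ n`. -/
def transMap (A : Type) [AddCommGroup A] {m n : ℕ} (h : m ∣ n) :
    (A ⧸ nsub A n) →+ (A ⧸ nsub A m) :=
  QuotientAddGroup.map _ _ (AddMonoidHom.id A) (fun x hx => nsub_le A h hx)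

section Completion

variable {A : Type} [AddCommGroup A]

@[simp]
theorem transMap_mk {m n : ℕ} (h : m ∣ n) (a : A) :
    transMap A h (a : A ⧸ nsub A n) = (a : A ⧸ nsub A m) := rfl

/-- A point of `Â = lim A/mA`, as a compatible family of residues. -/
def IsCompatible (f : ∀ m : ℕ+, A ⧸ nsub A m) : Prop :=
  ∀ (m n : ℕ+) (h : (m : ℕ) ∣ (n : ℕ)), transMap A h (f n) = f m

theorem isCompatible_diag (a : A) : IsCompatible fun m : ℕ+ => (a : A ⧸ nsub A m) :=
  fun _ _ _ => rfl

theorem nsub_le_of_forall_isCompatible_nsmul_eq_zero {e : ℕ}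
    (hkill : ∀ f : ∀ m : ℕ+, A ⧸ nsub A m, IsCompatible f → e • f = 0) (m : ℕ+) :
    nsub A e ≤ nsub A m := by
  rintro _ ⟨c, rfl⟩
  have h := congrFun (hkill _ (isCompatible_diag c)) m
  rw [Pi.smul_apply, ← QuotientAddGroup.mk_nsmul] at h
  exact (QuotientAddGroup.eq_zero_iff _).mp h

variable {e : ℕ+}

theorem forall_mk_eq_zero_iff_mem_nsub (hle : ∀ m : ℕ+, nsub A e ≤ nsub A m) (a : A) :
    (∀ m : ℕ+, (a : A ⧸ nsub A m) = 0) ↔ a ∈ nsub A e := by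
  simp only [QuotientAddGroup.eq_zero_iff]
  exact ⟨fun h => h e, fun ha m => hle m ha⟩

theorem IsCompatible.eq_diag (hle : ∀ m : ℕ+, nsub A e ≤ nsub A m)
    {f : ∀ m : ℕ+, A ⧸ nsub A m} (hf : IsCompatible f) {a : A}
    (ha : (a : A ⧸ nsub A e) = f e) : (fun m : ℕ+ => (a : A ⧸ nsub A m)) = f := by
  funext m
  obtain ⟨b, hb⟩ := QuotientAddGroup.mk_surjective (f (e * m))
  have hm : f m = (b : A ⧸ nsub A m) := by
    rw [← hf m (e * m) (Dvd.intro_left _ (PNat.mul_coe e m).symm), ← hb, transMap_mk]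
  have he : f e = (b : A ⧸ nsub A e) := by
    rw [← hf e (e * m) (Dvd.intro _ (PNat.mul_coe e m).symm), ← hb, transMap_mk]
  rw [hm, QuotientAddGroup.eq_iff_sub_mem]
  exact hle m (QuotientAddGroup.eq_iff_sub_mem.mp (ha.trans he))

end Completion

/-- If `Â = lim A/mA` has finite exponent, then there is a positive integer `m₀`
such that the natural map `A/m₀A → Â` is an isomorphism: the diagonal map `A → Â`
is surjective and its kernel is exactly `m₀A`. -/
theorem statement1 (A : Type) [AddCommGroup A]
    (hexp : ∃ e : ℕ, 0 < e ∧ ∀ f : ∀ m : ℕ+, A ⧸ nsub A m,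
      (∀ (m n : ℕ+) (h : (m : ℕ) ∣ (n : ℕ)), transMap A h (f n) = f m) → e • f = 0) :
    ∃ m₀ : ℕ+,
      (∀ f : ∀ m : ℕ+, A ⧸ nsub A m,
        (∀ (m n : ℕ+) (h : (m : ℕ) ∣ (n : ℕ)), transMap A h (f n) = f m) →
        ∃ a : A, (fun m : ℕ+ => ((a : A ⧸ nsub A m))) = f) ∧
      (∀ a : A, (∀ m : ℕ+, ((a : A ⧸ nsub A m)) = 0) ↔ a ∈ nsub A m₀) := by
  obtain ⟨e, he, hkill⟩ := hexp
  have hle := nsub_le_of_forall_isCompatible_nsmul_eq_zero hkill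
  refine ⟨⟨e, he⟩, fun f hf => ?_, forall_mk_eq_zero_iff_mem_nsub hle⟩
  obtain ⟨a, ha⟩ := QuotientAddGroup.mk_surjective (f ⟨e, he⟩)
  exact ⟨a, IsCompatible.eq_diag hle hf ha⟩
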